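/- arXiv:1608.05453 — 5 statements merged into one kernel-verified Lean document; each statement's English description precedes it below -/
import Mathlib

section
/- Let K be a commutative ring and let 𝔪 be the ideal of K[y_1,...,y_n] generated by y_1,...,y_n, and let 𝔫 be the ideal generated by the symmetric polynomials in 𝔪 (i.e., elements of 𝔪 fixed by the symmetric group action). Then for every k ∈ ℕ there exists N(k) ∈ ℕ such that y_1^{N(k)} lies in the ideal of K[y_1,...,y_n] generated by 𝔫^k. -/
set_option maxRecDepth 4000


open MvPolynomial

lemma esymm_mem_span_X (K : Type*) [CommRing K] (n : ℕ) (j : ℕ) (hj : 0 < j) :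
    esymm (Fin n) K j ∈ Ideal.span (Set.range (X : Fin n → MvPolynomial (Fin n) K)) := by
  rw [esymm]
  refine Ideal.sum_mem _ fun t ht => ?_
  rw [Finset.mem_powersetCard] at ht
  obtain ⟨a, ha⟩ := Finset.card_pos.mp (ht.2 ▸ hj)
  rw [← Finset.mul_prod_erase _ _ ha]
  exact Ideal.mul_mem_right _ _ (Ideal.subset_span ⟨a, rfl⟩)

/-- Let `𝔪 = (y_1,…,y_n)` in `K[y_1,…,y_n]` and `𝔫` the ideal generated by the symmetric
elements of `𝔪`.  Then for every `k` there is `N(k)` with `y_1^{N(k)} ∈ 𝔫^k`. -/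
theorem stmt1 (K : Type*) [CommRing K] (n : ℕ) (hn : 0 < n)
    (m : Ideal (MvPolynomial (Fin n) K))
    (hm : m = Ideal.span (Set.range (X : Fin n → MvPolynomial (Fin n) K)))
    (nn : Ideal (MvPolynomial (Fin n) K))
    (hnn : nn = Ideal.span {f : MvPolynomial (Fin n) K | f ∈ m ∧ f.IsSymmetric}) :
    ∀ k : ℕ, ∃ N : ℕ, (X (⟨0, hn⟩ : Fin n) : MvPolynomial (Fin n) K) ^ N ∈ nn ^ k := by
  set i0 : Fin n := ⟨0, hn⟩
  have hesymm : ∀ j, 0 < j → esymm (Fin n) K j ∈ nn := by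
    intro j hj
    rw [hnn]
    exact Ideal.subset_span ⟨hm ▸ esymm_mem_span_X K n j hj, esymm_isSymmetric _ _ _⟩
  have hcard : Fintype.card (Fin n) = n := Fintype.card_fin n
  have h0 : (0 : MvPolynomial (Fin n) K)
      = ∑ j ∈ Finset.range (n + 1), esymm (Fin n) K j * (-(X i0)) ^ (n - j) := by
    have := congrArg (Polynomial.eval (-(X i0 : MvPolynomial (Fin n) K)))
      (MvPolynomial.prod_C_add_X_eq_sum_esymm K (Fin n))
    rw [hcard] at this
    rw [Polynomial.eval_prod, Polynomial.eval_finset_sum,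
      Finset.prod_eq_zero (Finset.mem_univ i0) (by simp)] at this
    simpa using this
  rw [Finset.sum_range_succ'] at h0
  rw [esymm_zero, one_mul, Nat.sub_zero] at h0
  have hz : (-(X i0 : MvPolynomial (Fin n) K)) ^ n = (-1) ^ n * (X i0) ^ n :=
    neg_pow (X i0 : MvPolynomial (Fin n) K) n
  have h1 : ((-1 : MvPolynomial (Fin n) K) ^ n) * ((-1 : MvPolynomial (Fin n) K) ^ n) = 1 := by
    rw [← mul_pow]; simp
  have hx : (X i0 : MvPolynomial (Fin n) K) ^ n
      = (-1) ^ n * -(∑ i ∈ Finset.range n, esymm (Fin n) K (i + 1) * (-(X i0)) ^ (n - (i + 1))) := by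
    rw [hz] at h0
    calc (X i0 : MvPolynomial (Fin n) K) ^ n
        = (-1)^n * ((-1)^n * X i0 ^ n) := by rw [← mul_assoc, h1, one_mul]
      _ = _ := by
          congr 1
          linear_combination -h0
  have hmem : (X i0 : MvPolynomial (Fin n) K) ^ n ∈ nn := by
    rw [hx]
    refine Ideal.mul_mem_left _ _ (neg_mem (Ideal.sum_mem _ fun i _ => ?_))
    exact Ideal.mul_mem_right _ _ (hesymm (i + 1) i.succ_pos)
  intro k
  exact ⟨n * k, by rw [pow_mul]; exact Ideal.pow_mem_pow hmem k⟩
end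

section
/- With the non-degenerate polynomial action T_r·f := (t_{r+1} − q t_r)(s̃_r(f) − f)/(t_{r+1} − t_r) + q f and X_k·f := t_k f on K[t_1^{±1},...,t_n^{±1}], the cross relation X_{r+1}∘T_r = T_r∘X_r + (q−1)·X_{r+1} holds as operators, for every 1 ≤ r < n. -/
/-!
Multiply both sides by `t_{r+1} - t_r`. Then both sides of the cross relation become explicit through the
defining equation of `T`, applied to `f` and to `t_r f`; since `s̃_r` is multiplicative and sends `t_r` to
`t_{r+1}`, the two expressions agree as a polynomial identity. Laurent polynomials form a domain and
`t_{r+1} - t_r ≠ 0`, so the factor can be cancelled.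
-/

section CrossRelation

variable {K R F : Type*} [CommRing K] [CommRing R] [Algebra K R] [FunLike F R R] [MulHomClass F R R]

theorem mul_apply_eq_apply_mul_add_of_sub_mul_apply (q : K) (a b : R) (hreg : IsLeftRegular (b - a))
    (σ : F) (hσ : σ a = b) (T : R → R)
    (hT : ∀ f, (b - a) * T f = (b - q • a) * (σ f - f) + q • (f * (b - a))) (f : R) :
    b * T f = T (a * f) + (q - 1) • (b * f) := by
  apply hreg
  have hTa := hT (a * f)
  rw [map_mul, hσ] at hTa
  calc (b - a) * (b * T f) = b * ((b - a) * T f) := by ring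
    _ = (b - a) * T (a * f) + (b - a) * ((q - 1) • (b * f)) := by
      rw [hT, hTa]
      simp only [Algebra.smul_def, map_sub, map_one]
      ring
    _ = (b - a) * (T (a * f) + (q - 1) • (b * f)) := by ring

end CrossRelation

theorem AddMonoidAlgebra.single_one_sub_single_one_ne_zero {K G : Type*} [Field K] [AddMonoid G]
    {x y : G} (hxy : x ≠ y) : single x (1 : K) - single y 1 ≠ 0 := by
  intro h
  have hx := congrArg (fun p => p.coeff x) h
  simp [AddMonoidAlgebra.coeff_single, hxy.symm] at hx

theorem stmt6_general (K : Type*) [Field K] (q : K) (n : ℕ)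
    (r : ℕ) (hr : r + 1 < n)
    (t : Fin n → AddMonoidAlgebra K (Fin n →₀ ℤ))
    (ht : ∀ k : Fin n, t k = AddMonoidAlgebra.single (Finsupp.single k (1 : ℤ)) (1 : K))
    (σ : AddMonoidAlgebra K (Fin n →₀ ℤ) ≃ₐ[K] AddMonoidAlgebra K (Fin n →₀ ℤ))
    (hσ : ∀ (a : Fin n →₀ ℤ) (c : K),
      σ (AddMonoidAlgebra.single a c) =
        AddMonoidAlgebra.single
          (Finsupp.equivMapDomain (Equiv.swap (⟨r, Nat.lt_of_succ_lt hr⟩ : Fin n) ⟨r + 1, hr⟩) a) c)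
    (T : AddMonoidAlgebra K (Fin n →₀ ℤ) →ₗ[K] AddMonoidAlgebra K (Fin n →₀ ℤ))
    (hT : ∀ f : AddMonoidAlgebra K (Fin n →₀ ℤ),
      (t ⟨r + 1, hr⟩ - t ⟨r, Nat.lt_of_succ_lt hr⟩) * T f =
        (t ⟨r + 1, hr⟩ - q • t ⟨r, Nat.lt_of_succ_lt hr⟩) * (σ f - f) +
          q • (f * (t ⟨r + 1, hr⟩ - t ⟨r, Nat.lt_of_succ_lt hr⟩))) :
    ∀ f : AddMonoidAlgebra K (Fin n →₀ ℤ),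
      t ⟨r + 1, hr⟩ * T f =
        T (t ⟨r, Nat.lt_of_succ_lt hr⟩ * f) + (q - 1) • (t ⟨r + 1, hr⟩ * f) := by
  set i : Fin n := ⟨r, Nat.lt_of_succ_lt hr⟩
  set j : Fin n := ⟨r + 1, hr⟩
  have hji : j ≠ i := by simp [i, j, Fin.ext_iff]
  have hsub : t j - t i ≠ 0 := by
    rw [ht, ht]
    exact AddMonoidAlgebra.single_one_sub_single_one_ne_zero
      fun h => hji ((Finsupp.single_left_inj one_ne_zero).mp h)
  have hσt : σ (t i) = t j := by
    rw [ht, ht, hσ, Finsupp.equivMapDomain_single, Equiv.swap_apply_left]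
  exact mul_apply_eq_apply_mul_add_of_sub_mul_apply q (t i) (t j) (IsRegular.of_ne_zero hsub).left
    σ hσt T hT

/-- With the non-degenerate polynomial action
`T_r·f := (t_{r+1} − q t_r)(s̃_r(f) − f)/(t_{r+1} − t_r) + q f` and `X_k·f := t_k f` on the
Laurent polynomial ring `K[t_1^{±1},…,t_n^{±1}]` (realized as the group algebra of `Fin n →₀ ℤ`),
the cross relation `X_{r+1}∘T_r = T_r∘X_r + (q−1)·X_{r+1}` holds. -/
theorem stmt6 (K : Type*) [Field K] (q : K) (hq : q ≠ 0) (n : ℕ) (hn : 2 ≤ n)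
    (r : ℕ) (hr : r + 1 < n)
    (t : Fin n → AddMonoidAlgebra K (Fin n →₀ ℤ))
    (ht : ∀ k : Fin n, t k = AddMonoidAlgebra.single (Finsupp.single k (1 : ℤ)) (1 : K))
    (σ : AddMonoidAlgebra K (Fin n →₀ ℤ) ≃ₐ[K] AddMonoidAlgebra K (Fin n →₀ ℤ))
    (hσ : ∀ (a : Fin n →₀ ℤ) (c : K),
      σ (AddMonoidAlgebra.single a c) =
        AddMonoidAlgebra.single
          (Finsupp.equivMapDomain (Equiv.swap (⟨r, Nat.lt_of_succ_lt hr⟩ : Fin n) ⟨r + 1, hr⟩) a) c)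
    (T : AddMonoidAlgebra K (Fin n →₀ ℤ) →ₗ[K] AddMonoidAlgebra K (Fin n →₀ ℤ))
    (hT : ∀ f : AddMonoidAlgebra K (Fin n →₀ ℤ),
      (t ⟨r + 1, hr⟩ - t ⟨r, Nat.lt_of_succ_lt hr⟩) * T f =
        (t ⟨r + 1, hr⟩ - q • t ⟨r, Nat.lt_of_succ_lt hr⟩) * (σ f - f) +
          q • (f * (t ⟨r + 1, hr⟩ - t ⟨r, Nat.lt_of_succ_lt hr⟩))) :
    ∀ f : AddMonoidAlgebra K (Fin n →₀ ℤ),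
      t ⟨r + 1, hr⟩ * T f =
        T (t ⟨r, Nat.lt_of_succ_lt hr⟩ * f) + (q - 1) • (t ⟨r + 1, hr⟩ * f) :=
  stmt6_general K q n r hr t ht σ hσ T hT
end

section
/- Let A be a ring with identity, A_0 a commutative subring, e_1,...,e_m a complete set of pairwise orthogonal idempotents of A each commuting with A_0, and for each i let S_i ⊆ e_i A_0 e_i be a multiplicative set containing e_i. Assume: (O1) for g, h ∈ A and s ∈ S_i, s e_i g = 0 implies e_i g = 0, and h e_i s = 0 implies h e_i = 0; (O2) for all i, j, a ∈ e_j A e_i, s ∈ S_i, t ∈ S_j, there exist b, c ∈ e_j A e_i, u ∈ S_j, v ∈ S_i with u a = b s and a v = t c. Then there exists a ring A[S_1,...,S_m] with an injective ring homomorphism φ: A → A[S_1,...,S_m] such that for every i and every s ∈ S_i, φ(s) is invertible in the unital ring φ(e_i) A[S_1,...,S_m] φ(e_i). -/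
universe u

/-!
Let `D` be the submonoid of those `x ∈ A` that commute with every `e i` and have `e i * x ∈ S i`;
these are exactly the sums `∑ i, s i` with `s i ∈ S i`. By (O1) the elements of `D` are
non-zero-divisors on both sides. `D` is a left Ore set: for fixed `d ∈ D`, the `r` admitting
`d' * r = r' * d` with `d' ∈ D` form an additive submonoid (common left multiples in `D` come from
(O2) on the diagonal corners), (O2) puts every Peirce component `e j * r * e i` in it, and these
components sum to `r`. Hence `A` embeds in the Ore localization `A[D⁻¹]`. For `s ∈ S i`, the
element `d = s + ∑_{j ≠ i} e j` of `D` becomes a unit commuting with `e i`, and `e i * d⁻¹`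
inverts `s = e i * d` in the corner ring at `e i`.
-/

open Finset

section Idempotent

variable {R : Type*} [Semigroup R] {p q a : R}

theorem IsIdempotentElem.mul_eq_of_mul_mul_eq (hp : IsIdempotentElem p) (h : p * a * q = a) :
    p * a = a := by
  rw [← h, ← mul_assoc, ← mul_assoc, hp.eq]

theorem IsIdempotentElem.mul_eq_of_mul_mul_eq' (hq : IsIdempotentElem q) (h : p * a * q = a) :
    a * q = a := by
  rw [← h, mul_assoc, hq.eq]

end Idempotent

theorem IsIdempotentElem.corner_inverse {M : Type*} [Monoid M] {p : M} (hp : IsIdempotentElem p)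
    (u : Mˣ) (hpu : Commute p u) :
    p * (p * ↑u⁻¹) * p = p * ↑u⁻¹ ∧ p * u * (p * ↑u⁻¹) = p ∧ p * ↑u⁻¹ * (p * u) = p := by
  have hpu' : Commute p ↑u⁻¹ := hpu.units_inv_right
  refine ⟨?_, ?_, ?_⟩
  · rw [← mul_assoc, hp.eq, mul_assoc, ← hpu'.eq, ← mul_assoc, hp.eq]
  · rw [mul_assoc, ← mul_assoc (u : M), ← hpu.eq, mul_assoc, ← mul_assoc p, hp.eq,
      Units.mul_inv, mul_one]
  · rw [mul_assoc, ← mul_assoc (↑u⁻¹ : M), ← hpu'.eq, mul_assoc, ← mul_assoc p, hp.eq,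
      Units.inv_mul, mul_one]

namespace CompleteOrthogonalIdempotents

variable {A : Type*} [Semiring A] {ι : Type*} [Fintype ι] {e : ι → A}
  (he : CompleteOrthogonalIdempotents e)
include he

theorem sum_mul_eq (r : A) : ∑ i, e i * r = r := by
  rw [← sum_mul, he.complete, one_mul]

theorem sum_sum_mul_mul_eq (r : A) : ∑ j, ∑ i, e j * r * e i = r := by
  simp_rw [← mul_sum, he.complete, mul_one, he.sum_mul_eq]

theorem eq_zero_of_forall_mul_eq_zero {r : A} (h : ∀ i, e i * r = 0) : r = 0 := by
  rw [← he.sum_mul_eq r]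
  exact sum_eq_zero fun i _ ↦ h i

theorem eq_zero_of_forall_mul_eq_zero' {r : A} (h : ∀ i, r * e i = 0) : r = 0 := by
  rw [← mul_one r, ← he.complete, mul_sum]
  exact sum_eq_zero fun i _ ↦ h i

variable {f : ι → A} (hf : ∀ j, e j * f j * e j = f j)
include hf

theorem mul_sum_of_diagonal (i : ι) : e i * ∑ j, f j = f i := by
  classical
  rw [mul_sum, sum_eq_single i (fun j _ hji ↦ ?_) (by simp),
    (he.idem i).mul_eq_of_mul_mul_eq (hf i)]
  rw [← (he.idem j).mul_eq_of_mul_mul_eq (hf j), ← mul_assoc, he.ortho hji.symm, zero_mul]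

theorem sum_mul_of_diagonal (i : ι) : (∑ j, f j) * e i = f i := by
  classical
  rw [sum_mul, sum_eq_single i (fun j _ hji ↦ ?_) (by simp),
    (he.idem i).mul_eq_of_mul_mul_eq' (hf i)]
  rw [← (he.idem j).mul_eq_of_mul_mul_eq' (hf j), mul_assoc, he.ortho hji, mul_zero]

end CompleteOrthogonalIdempotents

section OreNumerators

variable {R : Type*} [Semiring R]

def oreNumerators (D : Submonoid R) (hD : ∀ d₁ ∈ D, ∀ d₂ ∈ D, ∃ w ∈ D, ∃ c, w * d₂ = c * d₁)
    (d : R) : AddSubmonoid R where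
  carrier := {r | ∃ d' ∈ D, ∃ r', d' * r = r' * d}
  zero_mem' := ⟨1, D.one_mem, 0, by simp⟩
  add_mem' := by
    rintro r₁ r₂ ⟨d₁, hd₁, r₁', h₁⟩ ⟨d₂, hd₂, r₂', h₂⟩
    obtain ⟨w, hw, c, hwc⟩ := hD d₁ hd₁ d₂ hd₂
    refine ⟨w * d₂, D.mul_mem hw hd₂, c * r₁' + w * r₂', ?_⟩
    calc w * d₂ * (r₁ + r₂) = c * (d₁ * r₁) + w * (d₂ * r₂) := by
          rw [mul_add, mul_assoc w d₂ r₂, hwc, mul_assoc]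
      _ = (c * r₁' + w * r₂') * d := by rw [h₁, h₂, add_mul, mul_assoc, mul_assoc]

end OreNumerators

section DiagonalSubmonoid

variable {A : Type*} [Ring A] {ι : Type*} [Fintype ι] {e : ι → A}

def diagonalSubmonoid (hidem : ∀ i, IsIdempotentElem (e i)) (S : ι → Set A)
    (hS₁ : ∀ i, e i ∈ S i) (hSmul : ∀ i, ∀ s ∈ S i, ∀ t ∈ S i, s * t ∈ S i) : Submonoid A where
  carrier := {x | ∀ i, Commute (e i) x ∧ e i * x ∈ S i}
  one_mem' i := ⟨Commute.one_right _, by simpa using hS₁ i⟩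
  mul_mem' {x y} hx hy i := by
    refine ⟨(hx i).1.mul_right (hy i).1, ?_⟩
    have : e i * x * (e i * y) = e i * (x * y) := by
      rw [← mul_assoc, mul_assoc (e i) x, ← (hx i).1.eq, ← mul_assoc, (hidem i).eq, mul_assoc]
    exact this ▸ hSmul i _ (hx i).2 _ (hy i).2

variable (he : CompleteOrthogonalIdempotents e) {S : ι → Set A} (hS₁ : ∀ i, e i ∈ S i)
  (hSmul : ∀ i, ∀ s ∈ S i, ∀ t ∈ S i, s * t ∈ S i)

local notation "𝒟" => diagonalSubmonoid he.idem S hS₁ hSmul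

theorem diagonalSubmonoid_le_nonZeroDivisorsLeft
    (hreg : ∀ i, ∀ s ∈ S i, ∀ g, s * (e i * g) = 0 → e i * g = 0) :
    𝒟 ≤ nonZeroDivisorsLeft A := by
  intro x hx r hxr
  refine he.eq_zero_of_forall_mul_eq_zero fun i ↦ hreg i _ (hx i).2 r ?_
  rw [← mul_assoc, mul_assoc (e i), ← (hx i).1.eq, ← mul_assoc, (he.idem i).eq, mul_assoc, hxr,
    mul_zero]

theorem diagonalSubmonoid_le_nonZeroDivisorsRight
    (hreg : ∀ i, ∀ s ∈ S i, ∀ h, h * e i * s = 0 → h * e i = 0) :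
    𝒟 ≤ nonZeroDivisorsRight A := by
  intro x hx r hrx
  refine he.eq_zero_of_forall_mul_eq_zero' fun i ↦ hreg i _ (hx i).2 r ?_
  rw [mul_assoc, ← mul_assoc (e i), (he.idem i).eq, (hx i).1.eq, ← mul_assoc, hrx, zero_mul]

variable (hS : ∀ i, ∀ s ∈ S i, e i * s * e i = s)
include hS

theorem sum_mem_diagonalSubmonoid {f : ι → A} (hf : ∀ i, f i ∈ S i) : ∑ i, f i ∈ 𝒟 := by
  have hfe : ∀ i, e i * f i * e i = f i := fun i ↦ hS i _ (hf i)
  intro i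
  rw [Commute, SemiconjBy, he.mul_sum_of_diagonal hfe, he.sum_mul_of_diagonal hfe]
  exact ⟨rfl, hf i⟩

theorem exists_mem_diagonalSubmonoid_mul_eq [DecidableEq ι] {j : ι} {u : A} (hu : u ∈ S j) :
    ∃ d ∈ 𝒟, e j * d = u := by
  have hf : ∀ i, Function.update e j u i ∈ S i := by
    intro i
    rcases eq_or_ne i j with rfl | hij
    · simpa using hu
    · simpa [hij] using hS₁ i
  refine ⟨_, sum_mem_diagonalSubmonoid he hS₁ hSmul hS hf, ?_⟩
  rw [he.mul_sum_of_diagonal (fun i ↦ hS i _ (hf i)), Function.update_self]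

variable (hO2 : ∀ i j, ∀ a, e j * a * e i = a → ∀ s ∈ S i,
    ∃ b u, e j * b * e i = b ∧ u ∈ S j ∧ u * a = b * s)
include hO2

theorem diagonalSubmonoid_exists_mul_eq_mul :
    ∀ d₁ ∈ 𝒟, ∀ d₂ ∈ 𝒟, ∃ w ∈ 𝒟, ∃ c, w * d₂ = c * d₁ := by
  intro d₁ hd₁ d₂ hd₂
  choose b w hb hw hwb using fun i ↦ hO2 i i _ (hS i _ (hd₂ i).2) _ (hd₁ i).2
  refine ⟨∑ i, w i, sum_mem_diagonalSubmonoid he hS₁ hSmul hS hw, ∑ i, b i, ?_⟩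
  rw [sum_mul, sum_mul]
  refine sum_congr rfl fun i _ ↦ ?_
  calc w i * d₂ = w i * (e i * d₂) := by
        rw [← mul_assoc, (he.idem i).mul_eq_of_mul_mul_eq' (hS i _ (hw i))]
    _ = b i * (e i * d₁) := hwb i
    _ = b i * d₁ := by rw [← mul_assoc, (he.idem i).mul_eq_of_mul_mul_eq' (hb i)]

local notation "𝒩" => oreNumerators 𝒟 (diagonalSubmonoid_exists_mul_eq_mul he hS₁ hSmul hS hO2)

theorem mem_oreNumerators_of_mul_mul_eq {d : A} (hd : d ∈ 𝒟) {i j : ι} {a : A}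
    (ha : e j * a * e i = a) : a ∈ 𝒩 d := by
  classical
  obtain ⟨b, u, hb, hu, hub⟩ := hO2 i j a ha _ (hd i).2
  obtain ⟨d', hd', hd'u⟩ := exists_mem_diagonalSubmonoid_mul_eq he hS₁ hSmul hS hu
  refine ⟨d', hd', b, ?_⟩
  calc d' * a = d' * e j * a := by rw [mul_assoc, (he.idem j).mul_eq_of_mul_mul_eq ha]
    _ = u * a := by rw [← (hd' j).1.eq, hd'u]
    _ = b * (e i * d) := hub
    _ = b * d := by rw [← mul_assoc, (he.idem i).mul_eq_of_mul_mul_eq' hb]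

theorem mem_oreNumerators_diagonalSubmonoid {d : A} (hd : d ∈ 𝒟) (r : A) : r ∈ 𝒩 d := by
  rw [← he.sum_sum_mul_mul_eq r]
  refine sum_mem fun j _ ↦ sum_mem fun i _ ↦
    mem_oreNumerators_of_mul_mul_eq he hS₁ hSmul hS hO2 hd (i := i) (j := j) ?_
  rw [← mul_assoc, ← mul_assoc, (he.idem j).eq, mul_assoc, (he.idem i).eq]

theorem nonempty_oreSet_diagonalSubmonoid
    (hreg : ∀ i, ∀ s ∈ S i, ∀ h, h * e i * s = 0 → h * e i = 0) :
    Nonempty (OreLocalization.OreSet 𝒟) := by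
  refine OreLocalization.nonempty_oreSet_iff.mpr ⟨fun r₁ r₂ d h ↦ ⟨1, ?_⟩, fun r d ↦ ?_⟩
  · rw [sub_eq_zero.mp (diagonalSubmonoid_le_nonZeroDivisorsRight he hS₁ hSmul hreg d.2 (r₁ - r₂)
      (by rw [sub_mul, h, sub_self]))]
  · obtain ⟨d', hd', r', h⟩ := mem_oreNumerators_diagonalSubmonoid he hS₁ hSmul hS hO2 d.2 r
    exact ⟨r', ⟨d', hd'⟩, h⟩

end DiagonalSubmonoid

theorem stmt7_general (A : Type u) [Ring A] (A0 : Subring A)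
    (m : ℕ) (e : Fin m → A)
    (hid : ∀ i, IsIdempotentElem (e i))
    (horth : ∀ i j, i ≠ j → e i * e j = 0)
    (hsum : ∑ i, e i = 1)
    (S : Fin m → Set A)
    (hSe : ∀ i, e i ∈ S i)
    (hSmul : ∀ i, ∀ s ∈ S i, ∀ t ∈ S i, s * t ∈ S i)
    (hScorner : ∀ i, ∀ s ∈ S i, ∃ f ∈ A0, s = e i * f * e i)
    (O1 : ∀ i, ∀ s ∈ S i,
      (∀ g : A, s * (e i * g) = 0 → e i * g = 0) ∧
      (∀ h : A, h * e i * s = 0 → h * e i = 0))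
    (O2 : ∀ i j : Fin m, ∀ a : A, e j * a * e i = a → ∀ s ∈ S i, ∀ t ∈ S j,
      ∃ b c u v : A, e j * b * e i = b ∧ e j * c * e i = c ∧ u ∈ S j ∧ v ∈ S i ∧
        u * a = b * s ∧ a * v = t * c) :
    ∃ (B : Type u) (_ : Ring B) (φ : A →+* B),
      Function.Injective φ ∧
        ∀ i, ∀ s ∈ S i, ∃ x : B,
          φ (e i) * x * φ (e i) = x ∧ φ s * x = φ (e i) ∧ x * φ s = φ (e i) := by
  have he : CompleteOrthogonalIdempotents e := ⟨⟨hid, horth⟩, hsum⟩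
  have hS : ∀ i, ∀ s ∈ S i, e i * s * e i = s := by
    intro i s hs
    obtain ⟨f, -, rfl⟩ := hScorner i s hs
    obtain ⟨hl, hr⟩ := (Subsemigroup.mem_corner_iff (hid i)).mp ⟨f, rfl⟩
    rw [hl, hr]
  have hO2 : ∀ i j, ∀ a, e j * a * e i = a → ∀ s ∈ S i,
      ∃ b u, e j * b * e i = b ∧ u ∈ S j ∧ u * a = b * s := by
    intro i j a ha s hs
    obtain ⟨b, -, u, -, hb, -, hu, -, hub, -⟩ := O2 i j a ha s hs (e j) (hSe j)
    exact ⟨b, u, hb, hu, hub⟩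
  obtain ⟨_⟩ := nonempty_oreSet_diagonalSubmonoid he hSe hSmul hS hO2 fun i s hs ↦ (O1 i s hs).2
  let φ := OreLocalization.numeratorRingHom (S := diagonalSubmonoid he.idem S hSe hSmul)
  refine ⟨_, inferInstance, φ, OreLocalization.numeratorHom_inj
    (diagonalSubmonoid_le_nonZeroDivisorsLeft he hSe hSmul fun i s hs ↦ (O1 i s hs).1),
    fun i s hs ↦ ?_⟩
  obtain ⟨d, hd, rfl⟩ := exists_mem_diagonalSubmonoid_mul_eq he hSe hSmul hS hs
  rw [map_mul]
  exact ⟨_, ((hid i).map φ).corner_inverse (OreLocalization.numeratorUnit ⟨d, hd⟩)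
    ((hd i).1.map φ)⟩

/-- Generalized Ore localization: under the generalized Ore conditions (O1), (O2) on
multiplicative sets `S i ⊆ e_i A₀ e_i` sitting in corners of a complete set of orthogonal
idempotents commuting with a commutative subring `A₀`, there is a ring `A[S_1,…,S_m]` with an
injective ring homomorphism `φ : A → A[S_1,…,S_m]` such that each `φ(s)`, `s ∈ S i`, is
invertible in the corner ring `φ(e_i) A[S_1,…,S_m] φ(e_i)` (with identity `φ(e_i)`). -/
theorem stmt7 (A : Type u) [Ring A] (A0 : Subring A)
    (hA0 : ∀ x y : A, x ∈ A0 → y ∈ A0 → x * y = y * x)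
    (m : ℕ) (e : Fin m → A)
    (hid : ∀ i, IsIdempotentElem (e i))
    (horth : ∀ i j, i ≠ j → e i * e j = 0)
    (hsum : ∑ i, e i = 1)
    (hcomm : ∀ f : A, f ∈ A0 → ∀ i, f * e i = e i * f)
    (S : Fin m → Set A)
    (hSe : ∀ i, e i ∈ S i)
    (hSmul : ∀ i, ∀ s ∈ S i, ∀ t ∈ S i, s * t ∈ S i)
    (hScorner : ∀ i, ∀ s ∈ S i, ∃ f ∈ A0, s = e i * f * e i)
    (O1 : ∀ i, ∀ s ∈ S i,
      (∀ g : A, s * (e i * g) = 0 → e i * g = 0) ∧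
      (∀ h : A, h * e i * s = 0 → h * e i = 0))
    (O2 : ∀ i j : Fin m, ∀ a : A, e j * a * e i = a → ∀ s ∈ S i, ∀ t ∈ S j,
      ∃ b c u v : A, e j * b * e i = b ∧ e j * c * e i = c ∧ u ∈ S j ∧ v ∈ S i ∧
        u * a = b * s ∧ a * v = t * c) :
    ∃ (B : Type u) (_ : Ring B) (φ : A →+* B),
      Function.Injective φ ∧
        ∀ i, ∀ s ∈ S i, ∃ x : B,
          φ (e i) * x * φ (e i) = x ∧ φ s * x = φ (e i) ∧ x * φ s = φ (e i) :=
  stmt7_general A A0 m e hid horth hsum S hSe hSmul hScorner O1 O2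
end

section
/- Let K be a field and let the degenerate affine Hecke algebra H_n act faithfully on P_n = K[t_1,...,t_n] via x_k·g = t_k g and s_r·g = −(s̃_r(g)−g)/(t_{r+1}−t_r) + s̃_r(g). Then the elements { x_1^{a_1}···x_n^{a_n} w : w ∈ S_n, a_1,...,a_n ∈ ℕ } are K-linearly independent in the algebra of K-linear operators on P_n generated by these operators. -/
/-!
Each `s_r` acts as the variable swap `s̃_r` up to terms of lower total degree, because the error
`e = s_r g - s̃_r g` satisfies `(t_{r+1} - t_r) e = g - s̃_r g`. Hence `x^a w` sends `t^b` to
`t^(a + w b)` modulo lower degree. In a nontrivial relation take a term `x^a w` with `|a|` maximal,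
and `b` so spread out that `a + w b` determines `(w, a)` among all terms; applied to `t^b`, the
relation's coefficient of `t^(a + w b)` is then the scalar of that term alone.
-/

open MvPolynomial

namespace Stmt14

def permFin (n : ℕ) (l : List ℕ) : Equiv.Perm (Fin n) :=
  (l.map fun a => if h : a + 1 < n then
      Equiv.swap (⟨a, Nat.lt_of_succ_lt h⟩ : Fin n) ⟨a + 1, h⟩ else 1).prod

section TotalDegreeLT

variable (σ R : Type*) [CommSemiring R]

noncomputable def totalDegreeLT (d : ℕ) : Submodule R (MvPolynomial σ R) :=
  restrictSupport R {m | m.degree < d}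

variable {σ R} {p q : MvPolynomial σ R} {d e : ℕ}

theorem mem_totalDegreeLT_iff : p ∈ totalDegreeLT σ R d ↔ ∀ m ∈ p.support, m.degree < d :=
  mem_restrictSupport_iff R

theorem mem_totalDegreeLT_of_totalDegree_lt (h : p.totalDegree < d) : p ∈ totalDegreeLT σ R d :=
  mem_totalDegreeLT_iff.2 fun _ hm => (le_totalDegree hm).trans_lt h

theorem totalDegree_le_of_mem_totalDegreeLT (hp : p ∈ totalDegreeLT σ R d) : p.totalDegree ≤ d :=
  Finset.sup_le fun m hm => (mem_totalDegreeLT_iff.1 hp m hm).le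

theorem totalDegree_lt_of_mem_totalDegreeLT (hp : p ∈ totalDegreeLT σ R d) (h0 : p ≠ 0) :
    p.totalDegree < d := by
  obtain ⟨m, hm⟩ := support_nonempty.2 h0
  exact (Finset.sup_lt_iff (bot_le.trans_lt (mem_totalDegreeLT_iff.1 hp m hm))).2
    (mem_totalDegreeLT_iff.1 hp)

theorem coeff_eq_zero_of_mem_totalDegreeLT (hp : p ∈ totalDegreeLT σ R d) {m : σ →₀ ℕ}
    (hm : d ≤ m.degree) : coeff m p = 0 :=
  notMem_support_iff.1 fun h => (mem_totalDegreeLT_iff.1 hp m h).not_ge hm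

theorem rename_mem_totalDegreeLT {τ : Type*} (f : σ → τ) (hp : p ∈ totalDegreeLT σ R d) :
    rename f p ∈ totalDegreeLT τ R d := by
  rcases eq_or_ne p 0 with rfl | h0
  · simp
  · exact mem_totalDegreeLT_of_totalDegree_lt
      ((totalDegree_rename_le f p).trans_lt (totalDegree_lt_of_mem_totalDegreeLT hp h0))

theorem mul_mem_totalDegreeLT (hq : q.totalDegree ≤ e) (hp : p ∈ totalDegreeLT σ R d) :
    q * p ∈ totalDegreeLT σ R (e + d) := by
  rcases eq_or_ne p 0 with rfl | h0
  · simp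
  · exact mem_totalDegreeLT_of_totalDegree_lt ((totalDegree_mul q p).trans_lt
      (Nat.add_lt_add_of_le_of_lt hq (totalDegree_lt_of_mem_totalDegreeLT hp h0)))

end TotalDegreeLT

section Exchange

variable {σ R : Type*} [CommRing R] [IsDomain R] [DecidableEq σ] {i j : σ}

theorem totalDegree_lt_totalDegree_X_sub_X_mul (hij : i ≠ j) {E : MvPolynomial σ R}
    (hE : E ≠ 0) : E.totalDegree < ((X j - X i) * E).totalDegree := by
  have hX : (X j - X i : MvPolynomial σ R) ≠ 0 := sub_ne_zero.2 ((X_injective (R := R)).ne hij.symm)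
  have hdeg := le_totalDegree (p := (X j - X i : MvPolynomial σ R)) (s := Finsupp.single j 1)
    (by simp [coeff_X, Finsupp.single_left_inj, hij])
  rw [Finsupp.sum_single_index rfl] at hdeg
  rw [totalDegree_mul_of_isDomain hX hE]
  omega

variable {T : Module.End R (MvPolynomial σ R)}
  (hT : ∀ g, (X j - X i) * T g =
    -(rename (Equiv.swap i j) g - g) + rename (Equiv.swap i j) g * (X j - X i))
include hT

theorem sub_rename_swap_mem_totalDegreeLT (hij : i ≠ j) {g : MvPolynomial σ R} {d : ℕ}
    (hg : g.totalDegree ≤ d) : T g - rename (Equiv.swap i j) g ∈ totalDegreeLT σ R d := by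
  set E := T g - rename (Equiv.swap i j) g
  have hE : (X j - X i) * E = g - rename (Equiv.swap i j) g := by
    rw [mul_sub, hT]
    ring
  rcases eq_or_ne E 0 with h0 | h0
  · rw [h0]
    exact zero_mem _
  refine mem_totalDegreeLT_of_totalDegree_lt ?_
  calc E.totalDegree < ((X j - X i) * E).totalDegree :=
        totalDegree_lt_totalDegree_X_sub_X_mul hij h0
    _ ≤ d := by
      rw [hE]
      exact (totalDegree_sub _ _).trans (max_le hg ((totalDegree_rename_le _ _).trans hg))

theorem apply_mem_totalDegreeLT (hij : i ≠ j) {p : MvPolynomial σ R} {d : ℕ}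
    (hp : p ∈ totalDegreeLT σ R d) : T p ∈ totalDegreeLT σ R d := by
  simpa using add_mem (rename_mem_totalDegreeLT (Equiv.swap i j) hp)
    (sub_rename_swap_mem_totalDegreeLT hT hij (totalDegree_le_of_mem_totalDegreeLT hp))

end Exchange

theorem list_prod_sub_rename_permFin_mem_totalDegreeLT {R : Type*} [CommRing R] [IsDomain R]
    {n : ℕ} (S : ℕ → Module.End R (MvPolynomial (Fin n) R))
    (hS : ∀ a : ℕ, ∀ h : a + 1 < n, ∀ g : MvPolynomial (Fin n) R,
      (X ⟨a + 1, h⟩ - X ⟨a, Nat.lt_of_succ_lt h⟩) * S a g =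
        -(rename (Equiv.swap (⟨a, Nat.lt_of_succ_lt h⟩ : Fin n) ⟨a + 1, h⟩) g - g) +
          rename (Equiv.swap (⟨a, Nat.lt_of_succ_lt h⟩ : Fin n) ⟨a + 1, h⟩) g *
            (X ⟨a + 1, h⟩ - X ⟨a, Nat.lt_of_succ_lt h⟩))
    {l : List ℕ} (hl : ∀ a ∈ l, a + 1 < n) {g : MvPolynomial (Fin n) R} {d : ℕ}
    (hg : g.totalDegree ≤ d) :
    (l.map S).prod g - rename (permFin n l) g ∈ totalDegreeLT (Fin n) R d := by
  induction l with
  | nil => simp [permFin]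
  | cons a l ih =>
    have ha : a + 1 < n := hl a List.mem_cons_self
    set i : Fin n := ⟨a, Nat.lt_of_succ_lt ha⟩
    set j : Fin n := ⟨a + 1, ha⟩
    have hij : i ≠ j := by simp [i, j, Fin.ext_iff]
    set w := permFin n l
    have hperm : permFin n (a :: l) = Equiv.swap i j * w := by
      simp [permFin, ha, w, i, j]
    have hsplit : ((a :: l).map S).prod g - rename (permFin n (a :: l)) g =
        S a ((l.map S).prod g - rename w g) +
          (S a (rename w g) - rename (Equiv.swap i j) (rename w g)) := by
      rw [hperm, Equiv.Perm.coe_mul, ← rename_rename, map_sub, List.map_cons, List.prod_cons,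
        Module.End.mul_apply]
      abel
    rw [hsplit]
    exact add_mem
      (apply_mem_totalDegreeLT (hS a ha) hij (ih fun b hb => hl b (List.mem_cons_of_mem _ hb)))
      (sub_rename_swap_mem_totalDegreeLT (hS a ha) hij ((totalDegree_rename_le _ _).trans hg))

/-- `(a + w b)_k = a_k + (A + 1) * w⁻¹ k`: for `a_k ≤ A` these are two digits in base `A + 1`. -/
noncomputable def separatingExponent (n A : ℕ) : Fin n →₀ ℕ :=
  Finsupp.equivFunOnFinite.symm fun k => (A + 1) * k

theorem eq_of_add_mapDomain_separatingExponent_eq {n A : ℕ} {w w' : Equiv.Perm (Fin n)}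
    {a a' : Fin n → ℕ} (ha : ∀ k, a k ≤ A) (ha' : ∀ k, a' k ≤ A)
    (h : Finsupp.equivFunOnFinite.symm a + (separatingExponent n A).mapDomain w =
      Finsupp.equivFunOnFinite.symm a' + (separatingExponent n A).mapDomain w') :
    w = w' ∧ a = a' := by
  have hk (k : Fin n) : a k + (A + 1) * (w.symm k : ℕ) = a' k + (A + 1) * (w'.symm k : ℕ) := by
    simpa [Finsupp.mapDomain_equiv_apply, separatingExponent] using DFunLike.congr_fun h k
  have hmod (k : Fin n) : a k = a' k := by
    simpa [Nat.add_mul_mod_self_left, Nat.mod_eq_of_lt (Nat.lt_succ_of_le (ha k)),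
      Nat.mod_eq_of_lt (Nat.lt_succ_of_le (ha' k))] using congrArg (· % (A + 1)) (hk k)
  have hdiv (k : Fin n) : w.symm k = w'.symm k := by
    have := congrArg (· / (A + 1)) (hk k)
    simp only [Nat.add_mul_div_left _ _ A.succ_pos, Nat.div_eq_of_lt (Nat.lt_succ_of_le (ha k)),
      Nat.div_eq_of_lt (Nat.lt_succ_of_le (ha' k)), zero_add] at this
    exact Fin.ext this
  exact ⟨Equiv.symm_bijective.injective (Equiv.ext hdiv), funext hmod⟩

section Independence

theorem prod_X_pow_eq_monomial_equivFunOnFinite {σ R : Type*} [CommSemiring R] [Fintype σ]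
    (a : σ → ℕ) :
    ∏ k, (X k : MvPolynomial σ R) ^ a k = monomial (Finsupp.equivFunOnFinite.symm a) 1 := by
  rw [monomial_eq, Finsupp.prod_fintype _ _ fun _ => pow_zero _]
  simp

variable {R : Type*} [CommRing R] {n : ℕ}
  {W : Equiv.Perm (Fin n) → Module.End R (MvPolynomial (Fin n) R)}
  (hW : ∀ w g d, g.totalDegree ≤ d → W w g - rename w g ∈ totalDegreeLT (Fin n) R d)
include hW

theorem coeff_prod_X_pow_mul_apply_monomial_separatingExponent {A : ℕ}
    {w w₁ : Equiv.Perm (Fin n)} {a a₁ : Fin n → ℕ} (ha : ∑ k, a k ≤ A) (ha₁ : ∑ k, a₁ k = A) :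
    coeff (Finsupp.equivFunOnFinite.symm a₁ + (separatingExponent n A).mapDomain w₁)
        ((∏ k, X k ^ a k) * W w (monomial (separatingExponent n A) 1)) =
      if (w, a) = (w₁, a₁) then 1 else 0 := by
  set b := separatingExponent n A
  set g : MvPolynomial (Fin n) R := monomial b 1
  have hlow : coeff (Finsupp.equivFunOnFinite.symm a₁ + b.mapDomain w₁)
      (monomial (Finsupp.equivFunOnFinite.symm a) 1 * (W w g - rename w g)) = 0 := by
    refine coeff_eq_zero_of_mem_totalDegreeLT
      (mul_mem_totalDegreeLT (e := A) ?_ (hW w g b.degree (totalDegree_monomial_le b 1))) ?_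
    · exact (totalDegree_monomial_le _ _).trans ((Finsupp.degree_eq_sum _).trans_le ha)
    · rw [map_add, Finsupp.degree_mapDomain,
        Finsupp.degree_eq_sum (Finsupp.equivFunOnFinite.symm a₁)]
      simp [ha₁]
  have hentry (a : Fin n → ℕ) (ha : ∑ k, a k ≤ A) (k : Fin n) : a k ≤ A :=
    (Finset.single_le_sum (fun _ _ => Nat.zero_le _) (Finset.mem_univ k)).trans ha
  rw [prod_X_pow_eq_monomial_equivFunOnFinite, ← add_sub_cancel (rename w g) (W w g), mul_add,
    coeff_add, hlow, add_zero, rename_monomial, monomial_mul, one_mul, coeff_monomial]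
  refine if_congr ⟨fun h => ?_, fun h => ?_⟩ rfl rfl
  · obtain ⟨rfl, rfl⟩ :=
      eq_of_add_mapDomain_separatingExponent_eq (hentry a ha) (hentry a₁ ha₁.le) h
    rfl
  · obtain ⟨rfl, rfl⟩ := Prod.mk.inj h
    rfl

theorem linearIndependent_prod_X_pow_mul_comp :
    LinearIndependent R (fun p : Equiv.Perm (Fin n) × (Fin n → ℕ) =>
      LinearMap.mulLeft R (∏ k, (X k : MvPolynomial (Fin n) R) ^ p.2 k) ∘ₗ W p.1) := by
  classical
  rw [linearIndependent_iff]
  intro c hc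
  by_contra hne
  obtain ⟨p₁, hp₁, hmax⟩ := c.support.exists_max_image (fun p => ∑ k, p.2 k)
    (Finsupp.support_nonempty_iff.2 hne)
  set A := ∑ k, p₁.2 k
  have h := congrArg (fun T : Module.End R (MvPolynomial (Fin n) R) =>
    coeff (Finsupp.equivFunOnFinite.symm p₁.2 + (separatingExponent n A).mapDomain p₁.1)
      (T (monomial (separatingExponent n A) 1))) hc
  simp only [Finsupp.linearCombination_apply, Finsupp.sum, LinearMap.sum_apply,
    LinearMap.smul_apply, LinearMap.comp_apply, LinearMap.mulLeft_apply, coeff_sum, coeff_smul,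
    smul_eq_mul, LinearMap.zero_apply, coeff_zero] at h
  rw [Finset.sum_congr rfl fun p hp => by
    rw [coeff_prod_X_pow_mul_apply_monomial_separatingExponent hW (hmax p hp) rfl]] at h
  simp only [mul_ite, mul_one, mul_zero, Prod.mk.eta, Finset.sum_ite_eq', hp₁, if_true] at h
  exact Finsupp.mem_support_iff.1 hp₁ h

end Independence

/-- Linear independence (PBW property) of the elements `x_1^{a_1}⋯x_n^{a_n} w` of the degenerate
affine Hecke algebra, realized as operators on `P_n = K[t_1,…,t_n]` via the faithful polynomial
representation `x_k·g = t_k g`, `s_r·g = −(s̃_r(g)−g)/(t_{r+1}−t_r) + s̃_r(g)` (each `S a` is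
characterized by its defining identity after clearing the denominator), where the operator of
`w ∈ S_n` is the product of the `S a` along a reduced word for `w`. -/
theorem stmt14 (K : Type*) [Field K] (n : ℕ)
    (S : ℕ → Module.End K (MvPolynomial (Fin n) K))
    (hS : ∀ a : ℕ, ∀ h : a + 1 < n, ∀ g : MvPolynomial (Fin n) K,
      (X ⟨a + 1, h⟩ - X ⟨a, Nat.lt_of_succ_lt h⟩) * S a g =
        -(rename (Equiv.swap (⟨a, Nat.lt_of_succ_lt h⟩ : Fin n) ⟨a + 1, h⟩) g - g) +
          rename (Equiv.swap (⟨a, Nat.lt_of_succ_lt h⟩ : Fin n) ⟨a + 1, h⟩) g *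
            (X ⟨a + 1, h⟩ - X ⟨a, Nat.lt_of_succ_lt h⟩))
    (W : Equiv.Perm (Fin n) → Module.End K (MvPolynomial (Fin n) K))
    (hW : ∀ w : Equiv.Perm (Fin n), ∃ l : List ℕ,
      (∀ a ∈ l, a + 1 < n) ∧
      (∀ l' : List ℕ, (∀ a ∈ l', a + 1 < n) → permFin n l' = permFin n l →
        l.length ≤ l'.length) ∧
      permFin n l = w ∧ W w = (l.map S).prod) :
    LinearIndependent K
      (fun p : Equiv.Perm (Fin n) × (Fin n → ℕ) =>
        (LinearMap.mulLeft K (∏ k, (X k : MvPolynomial (Fin n) K) ^ p.2 k)) ∘ₗ W p.1) := by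
  refine linearIndependent_prod_X_pow_mul_comp fun w g d hg => ?_
  obtain ⟨l, hl, -, rfl, hWl⟩ := hW w
  rw [hWl]
  exact list_prod_sub_rename_permFin_mem_totalDegreeLT S hS hl hg

end Stmt14
end

section
/- Let K be a field and consider the localization Ṗ of K[t_1,...,t_n] at the multiplicative set generated by { t_r − t_s : 1 ≤ r ≠ s ≤ n }. The symmetric group S_n acts on Ṗ by permuting variables. Then for any f ∈ Ṗ and 1 ≤ r < n, the operator s_r·f := −(s̃_r(f)−f)/(t_{r+1}−t_r) + s̃_r(f) is well-defined on Ṗ and the operators s_1,...,s_{n-1} satisfy the braid relations s_r s_{r+1} s_r = s_{r+1} s_r s_{r+1}. -/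
/-!
Write `x, y, z` for `t_r, t_{r+1}, t_{r+2}`, `u = 1/(y - x)`, `v = 1/(z - y)` and `w = 1/(z - x)`.
A ring endomorphism of a localization is determined by its restriction to the polynomials, so the
variable swaps `s̃_r, s̃_{r+1}` on `Ṗ` are involutions satisfying the braid relation. By uniqueness
of inverses they permute `±u, ±v, ±w`, and after expanding both sides of the braid relation for the
operators, the only identity left to use is the partial fraction decomposition `u v = w (u + v)`.
-/

open MvPolynomial

section DemazureLusztig

variable {A : Type*} [CommRing A]

/-- `f ↦ σ f - (σ f - f) / δ`, where `d` is the inverse of `δ`. -/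
def demazureLusztig (σ : A ≃+* A) (d f : A) : A := -(σ f - f) * d + σ f

theorem map_eq_of_mul_eq_one {M N F : Type*} [CommMonoid M] [CommMonoid N] [FunLike F M N]
    [MonoidHomClass F M N] (φ : F) {a c : M} {b d : N} (hab : φ a = b) (hc : a * c = 1)
    (hd : b * d = 1) : φ c = d :=
  left_inv_eq_right_inv (by rw [mul_comm, ← hab, ← map_mul, hc, map_one]) hd

theorem demazureLusztig_braid (σ₁ σ₂ : A ≃+* A) (h₁ : ∀ f, σ₁ (σ₁ f) = f)
    (h₂ : ∀ f, σ₂ (σ₂ f) = f) (hbraid : ∀ f, σ₂ (σ₁ (σ₂ f)) = σ₁ (σ₂ (σ₁ f)))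
    {x y z u v : A} (h₁x : σ₁ x = y) (h₁y : σ₁ y = x) (h₁z : σ₁ z = z)
    (h₂x : σ₂ x = x) (h₂y : σ₂ y = z) (h₂z : σ₂ z = y)
    (hu : (y - x) * u = 1) (hv : (z - y) * v = 1) (f : A) :
    demazureLusztig σ₁ u (demazureLusztig σ₂ v (demazureLusztig σ₁ u f)) =
      demazureLusztig σ₂ v (demazureLusztig σ₁ u (demazureLusztig σ₂ v f)) := by
  set w := σ₁ v with hw
  have hw_inv : (z - x) * w = 1 := by
    rw [hw, ← h₁z, ← h₁y, ← map_sub, ← map_mul, hv, map_one]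
  have h₁u : σ₁ u = -u :=
    map_eq_of_mul_eq_one σ₁ (by rw [map_sub, h₁x, h₁y]) hu (by linear_combination hu)
  have h₁w : σ₁ w = v := h₁ v
  have h₂u : σ₂ u = w := map_eq_of_mul_eq_one σ₂ (by rw [map_sub, h₂x, h₂y]) hu hw_inv
  have h₂v : σ₂ v = -v :=
    map_eq_of_mul_eq_one σ₂ (by rw [map_sub, h₂y, h₂z]) hv (by linear_combination hv)
  have h₂w : σ₂ w = u := map_eq_of_mul_eq_one σ₂ (by rw [map_sub, h₂x, h₂z]) hw_inv hu
  have partial_fractions : u * v = w * u + w * v := by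
    linear_combination (-(u * v)) * hw_inv + w * u * hv + w * v * hu
  simp only [demazureLusztig, map_add, map_mul, map_neg, map_sub, h₁, h₂, hbraid,
    h₁u, h₁w, h₂u, h₂v, h₂w, ← hw]
  linear_combination ((1 - u) * σ₁ f - (1 - v) * σ₂ f - (v - u) * f) * partial_fractions

end DemazureLusztig

section RenameLift

variable {ι R S : Type*} [CommRing R] [CommRing S] [Algebra (MvPolynomial ι R) S]

def IsRenameLift (φ : S →+* S) (e : ι → ι) : Prop :=
  ∀ p, φ (algebraMap (MvPolynomial ι R) S p) = algebraMap (MvPolynomial ι R) S (rename e p)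

theorem isRenameLift_id : IsRenameLift (R := R) (RingHom.id S) (id : ι → ι) := fun p => by
  rw [rename_id, AlgHom.id_apply, RingHom.id_apply]

theorem IsRenameLift.comp {φ ψ : S →+* S} {e e' : ι → ι} (hφ : IsRenameLift (R := R) φ e)
    (hψ : IsRenameLift (R := R) ψ e') : IsRenameLift (R := R) (φ.comp ψ) (e ∘ e') := fun p => by
  rw [RingHom.comp_apply, hψ, hφ, rename_rename]

theorem IsRenameLift.unique (M : Submonoid (MvPolynomial ι R)) [IsLocalization M S]
    {φ ψ : S →+* S} {e : ι → ι} (hφ : IsRenameLift (R := R) φ e)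
    (hψ : IsRenameLift (R := R) ψ e) : φ = ψ :=
  IsLocalization.ringHom_ext M (RingHom.ext fun p => (hφ p).trans (hψ p).symm)

variable [DecidableEq ι]

theorem IsRenameLift.apply_apply_of_swap (M : Submonoid (MvPolynomial ι R)) [IsLocalization M S]
    {φ : S →+* S} {i j : ι} (hφ : IsRenameLift (R := R) φ (Equiv.swap i j)) (f : S) : φ (φ f) = f := by
  have hinv : φ.comp φ = RingHom.id S := by
    refine IsRenameLift.unique M (hφ.comp hφ) ?_
    rw [← Equiv.Perm.coe_mul, Equiv.swap_mul_self, Equiv.Perm.coe_one]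
    exact isRenameLift_id
  exact RingHom.congr_fun hinv f

theorem IsRenameLift.braid_of_swap (M : Submonoid (MvPolynomial ι R)) [IsLocalization M S]
    {φ ψ : S →+* S} {i j k : ι} (hij : i ≠ j) (hik : i ≠ k)
    (hjk : j ≠ k) (hφ : IsRenameLift (R := R) φ (Equiv.swap i j))
    (hψ : IsRenameLift (R := R) ψ (Equiv.swap j k)) (f : S) : ψ (φ (ψ f)) = φ (ψ (φ f)) := by
  have hperm : Equiv.swap j k * (Equiv.swap i j * Equiv.swap j k) =
      Equiv.swap i j * (Equiv.swap j k * Equiv.swap i j) := by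
    rw [← mul_assoc, ← mul_assoc, Equiv.swap_mul_swap_mul_swap hij hik, Equiv.swap_comm i j,
      Equiv.swap_comm j k, Equiv.swap_mul_swap_mul_swap hjk.symm hik.symm, Equiv.swap_comm]
  have hlhs := hψ.comp (hφ.comp hψ)
  have hrhs := hφ.comp (hψ.comp hφ)
  simp only [← Equiv.Perm.coe_mul, hperm] at hlhs hrhs
  exact RingHom.congr_fun (IsRenameLift.unique M hlhs hrhs) f

end RenameLift

theorem stmt17_general (K : Type*) [Field K] (n : ℕ)
    (M : Submonoid (MvPolynomial (Fin n) K))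
    (r : ℕ) (hr : r + 2 < n)
    (σ1 σ2 : Localization M ≃+* Localization M)
    (hσ1 : ∀ p : MvPolynomial (Fin n) K,
      σ1 (algebraMap (MvPolynomial (Fin n) K) (Localization M) p) =
        algebraMap (MvPolynomial (Fin n) K) (Localization M)
          (rename (Equiv.swap (⟨r, Nat.lt_of_succ_lt (Nat.lt_of_succ_lt hr)⟩ : Fin n)
            ⟨r + 1, Nat.lt_of_succ_lt hr⟩) p))
    (hσ2 : ∀ p : MvPolynomial (Fin n) K,
      σ2 (algebraMap (MvPolynomial (Fin n) K) (Localization M) p) =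
        algebraMap (MvPolynomial (Fin n) K) (Localization M)
          (rename (Equiv.swap (⟨r + 1, Nat.lt_of_succ_lt hr⟩ : Fin n) ⟨r + 2, hr⟩) p))
    (d1inv d2inv : Localization M)
    (hd1 : algebraMap (MvPolynomial (Fin n) K) (Localization M)
        (X ⟨r + 1, Nat.lt_of_succ_lt hr⟩ - X ⟨r, Nat.lt_of_succ_lt (Nat.lt_of_succ_lt hr)⟩)
          * d1inv = 1)
    (hd2 : algebraMap (MvPolynomial (Fin n) K) (Localization M)
        (X ⟨r + 2, hr⟩ - X ⟨r + 1, Nat.lt_of_succ_lt hr⟩) * d2inv = 1)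
    (S1 S2 : Localization M → Localization M)
    (hS1 : ∀ f : Localization M, S1 f = -(σ1 f - f) * d1inv + σ1 f)
    (hS2 : ∀ f : Localization M, S2 f = -(σ2 f - f) * d2inv + σ2 f) :
    ∀ f : Localization M, S1 (S2 (S1 f)) = S2 (S1 (S2 f)) := by
  intro f
  have hφ : IsRenameLift (R := K) (σ1 : Localization M →+* Localization M) _ := hσ1
  have hψ : IsRenameLift (R := K) (σ2 : Localization M →+* Localization M) _ := hσ2
  have h01 : (⟨r, by omega⟩ : Fin n) ≠ ⟨r + 1, by omega⟩ := by simp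
  have h02 : (⟨r, by omega⟩ : Fin n) ≠ ⟨r + 2, hr⟩ := by simp
  have h12 : (⟨r + 1, by omega⟩ : Fin n) ≠ ⟨r + 2, hr⟩ := by simp
  obtain rfl : S1 = demazureLusztig σ1 d1inv := funext hS1
  obtain rfl : S2 = demazureLusztig σ2 d2inv := funext hS2
  rw [map_sub] at hd1 hd2
  refine demazureLusztig_braid σ1 σ2 (hφ.apply_apply_of_swap M) (hψ.apply_apply_of_swap M)
    (hφ.braid_of_swap M h01 h02 h12 hψ) ?_ ?_ ?_ ?_ ?_ ?_ hd1 hd2 f <;>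
  simp only [hσ1, hσ2, rename_X, Equiv.swap_apply_left, Equiv.swap_apply_right,
    Equiv.swap_apply_of_ne_of_ne h01 h02, Equiv.swap_apply_of_ne_of_ne h02.symm h12.symm]

/-- On the localization `Ṗ` of `K[t_1,…,t_n]` at the multiplicative set generated by the
differences `t_r − t_s` (`r ≠ s`), on which `S_n` acts by permuting the variables, the operators
`s_r·f := −(s̃_r(f)−f)/(t_{r+1}−t_r) + s̃_r(f)` are well defined (the difference `t_{r+1}−t_r` is
invertible in `Ṗ`) and satisfy the braid relations `s_r s_{r+1} s_r = s_{r+1} s_r s_{r+1}`. -/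
theorem stmt17 (K : Type*) [Field K] (n : ℕ)
    (M : Submonoid (MvPolynomial (Fin n) K))
    (hM : M = Submonoid.closure {p : MvPolynomial (Fin n) K | ∃ r s : Fin n, r ≠ s ∧ p = X r - X s})
    (r : ℕ) (hr : r + 2 < n)
    (σ1 σ2 : Localization M ≃+* Localization M)
    (hσ1 : ∀ p : MvPolynomial (Fin n) K,
      σ1 (algebraMap (MvPolynomial (Fin n) K) (Localization M) p) =
        algebraMap (MvPolynomial (Fin n) K) (Localization M)
          (rename (Equiv.swap (⟨r, Nat.lt_of_succ_lt (Nat.lt_of_succ_lt hr)⟩ : Fin n)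
            ⟨r + 1, Nat.lt_of_succ_lt hr⟩) p))
    (hσ2 : ∀ p : MvPolynomial (Fin n) K,
      σ2 (algebraMap (MvPolynomial (Fin n) K) (Localization M) p) =
        algebraMap (MvPolynomial (Fin n) K) (Localization M)
          (rename (Equiv.swap (⟨r + 1, Nat.lt_of_succ_lt hr⟩ : Fin n) ⟨r + 2, hr⟩) p))
    (d1inv d2inv : Localization M)
    (hd1 : algebraMap (MvPolynomial (Fin n) K) (Localization M)
        (X ⟨r + 1, Nat.lt_of_succ_lt hr⟩ - X ⟨r, Nat.lt_of_succ_lt (Nat.lt_of_succ_lt hr)⟩)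
          * d1inv = 1)
    (hd2 : algebraMap (MvPolynomial (Fin n) K) (Localization M)
        (X ⟨r + 2, hr⟩ - X ⟨r + 1, Nat.lt_of_succ_lt hr⟩) * d2inv = 1)
    (S1 S2 : Localization M → Localization M)
    (hS1 : ∀ f : Localization M, S1 f = -(σ1 f - f) * d1inv + σ1 f)
    (hS2 : ∀ f : Localization M, S2 f = -(σ2 f - f) * d2inv + σ2 f) :
    ∀ f : Localization M, S1 (S2 (S1 f)) = S2 (S1 (S2 f)) :=
  stmt17_general K n M r hr σ1 σ2 hσ1 hσ2 d1inv d2inv hd1 hd2 S1 S2 hS1 hS2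
end
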